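/- arXiv:1512.02518 — 2 statements merged into one kernel-verified Lean document; each statement's English description precedes it below -/
import Mathlib

section
/- Let R be a standard graded ring of finite F-representation type over an F-finite field R₀ of prime characteristic p, and let I ⊆ R be a homogeneous ideal. Then there exists b ∈ ℕ₀, independent of q, such that m^{bq}·H⁰_m(R/I^[q]) = 0 for all q = pⁿ; i.e., I satisfies the (LC) property. -/
/-- Zeroth local cohomology with support in `J`: the submodule of elements annihilated by some
power of `J`. -/
noncomputable def H0 {R : Type*} [CommRing R] (J : Ideal R)
    (M : Type*) [AddCommGroup M] [Module R M] : Submodule R M :=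
  ⨆ k : ℕ, Submodule.torsionBySet R M ((J ^ k : Ideal R) : Set R)

/-- Standard graded: the degree-zero piece is the base field and the algebra is generated in
degree one. -/
def IsStandardGraded {K R : Type*} [Field K] [CommRing R] [Algebra K R]
    (𝒜 : ℕ → Submodule K R) [GradedAlgebra 𝒜] : Prop :=
  𝒜 0 = (1 : Submodule K R) ∧ ∀ n : ℕ, 𝒜 (n + 1) = 𝒜 1 * 𝒜 n

/-- `R` viewed as an `R`-algebra via the ring endomorphism `φ` (e.g. a power of the Frobenius). -/
def FrobAlg (R : Type*) [CommRing R] (_φ : R →+* R) : Type _ := R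

instance FrobAlg.commRing (R : Type*) [CommRing R] (φ : R →+* R) : CommRing (FrobAlg R φ) :=
  inferInstanceAs (CommRing R)

instance FrobAlg.algebra (R : Type*) [CommRing R] (φ : R →+* R) : Algebra R (FrobAlg R φ) :=
  (show R →+* FrobAlg R φ from φ).toAlgebra

/-- The identity map of `R`, viewed as landing in `FrobAlg R φ`. -/
def FrobAlg.of (R : Type*) [CommRing R] (φ : R →+* R) : R → FrobAlg R φ := id

/-- The `q`-th Frobenius power of an ideal: the ideal generated by the `q`-th powers of its
elements. -/
def Ideal.frobPow {R : Type*} [CommRing R] (I : Ideal R) (q : ℕ) : Ideal R :=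
  Ideal.span ((fun x => x ^ q) '' (I : Set R))

/-!
Write `q = pⁿ` and `F = Fⁿ(R)`. Through the decomposition `F ≅ ⨁ⱼ M_{iⱼ}`, the module
`F ⧸ I F` embeds into `⨁ⱼ M_{iⱼ} ⧸ I M_{iⱼ}`, so its `H⁰_m` is killed by `m ^ c`, where `c`
works for the finitely many Noetherian modules `Mᵢ ⧸ I Mᵢ` at once. As an `R`-module `F ⧸ I F` is
`R ⧸ I^[q]` with `R` acting through `q`-th powers, so `(m ^ c)^[q]` kills `H⁰_m(R ⧸ I^[q])`.
Finally `m ^ (N q) ⊆ m^[q]` when `m` has `N` generators (pigeonhole), so `b = N c` works.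
-/

section H0

variable {R M N : Type*} [CommRing R] [AddCommGroup M] [Module R M] [AddCommGroup N] [Module R N]
  (J : Ideal R)

theorem mem_H0_iff {x : M} : x ∈ H0 J M ↔ ∃ k, ∀ a ∈ J ^ k, a • x = 0 := by
  rw [H0, Submodule.mem_iSup_of_directed _
    (Monotone.directed_le fun i j h => Submodule.torsionBySet_le_torsionBySet_pow i j h J)]
  simp only [Submodule.mem_torsionBySet_iff, Subtype.forall, SetLike.mem_coe]

theorem map_mem_H0 (f : M →ₗ[R] N) {x : M} (hx : x ∈ H0 J M) : f x ∈ H0 J N := by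
  obtain ⟨k, hk⟩ := (mem_H0_iff J).mp hx
  exact (mem_H0_iff J).mpr ⟨k, fun a ha => by rw [← map_smul, hk a ha, map_zero]⟩

theorem exists_pow_le_annihilator_H0 [IsNoetherian R M] :
    ∃ c, J ^ c ≤ (H0 J M).annihilator := by
  obtain ⟨c, hc⟩ := monotone_stabilizes_iff_noetherian.mpr inferInstance
    ⟨_, fun i j h => Submodule.torsionBySet_le_torsionBySet_pow (M := M) i j h J⟩
  refine ⟨c, fun a ha => Submodule.mem_annihilator.mpr fun x hx => ?_⟩
  obtain ⟨k, hk⟩ := (mem_H0_iff J).mp hx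
  have hstable : Submodule.torsionBySet R M ((J ^ c : Ideal R) : Set R) =
      Submodule.torsionBySet R M ((J ^ max c k : Ideal R) : Set R) := hc _ (le_max_left c k)
  have hx' : x ∈ Submodule.torsionBySet R M ((J ^ c : Ideal R) : Set R) := hstable ▸
    (Submodule.mem_torsionBySet_iff _ _).mpr fun b =>
      hk b (Ideal.pow_le_pow_right (le_max_right c k) b.2)
  exact (Submodule.mem_torsionBySet_iff _ _).mp hx' ⟨a, ha⟩

theorem exists_pow_le_annihilator_H0_forall {ι : Type*} [Fintype ι] (N : ι → Type*)
    [∀ i, AddCommGroup (N i)] [∀ i, Module R (N i)] [∀ i, IsNoetherian R (N i)] :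
    ∃ c, ∀ i, J ^ c ≤ (H0 J (N i)).annihilator := by
  choose c hc using fun i => exists_pow_le_annihilator_H0 (M := N i) J
  exact ⟨Finset.univ.sup c,
    fun i => (Ideal.pow_le_pow_right (Finset.le_sup (Finset.mem_univ i))).trans (hc i)⟩

theorem annihilator_H0_le_of_injective (f : M →ₗ[R] N) (hf : Function.Injective f) :
    (H0 J N).annihilator ≤ (H0 J M).annihilator := fun a ha =>
  Submodule.mem_annihilator.mpr fun x hx => hf <| by
    rw [map_smul, Submodule.mem_annihilator.mp ha _ (map_mem_H0 J f hx), map_zero]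

open DirectSum in
theorem iInf_annihilator_H0_le_annihilator_H0_directSum {ι : Type*} (N : ι → Type*)
    [∀ i, AddCommGroup (N i)] [∀ i, Module R (N i)] :
    ⨅ i, (H0 J (N i)).annihilator ≤ (H0 J (⨁ i, N i)).annihilator := fun a ha =>
  Submodule.mem_annihilator.mpr fun x hx => by
    classical
    ext i
    rw [DirectSum.smul_apply, DirectSum.zero_apply]
    exact Submodule.mem_annihilator.mp (Submodule.mem_iInf _ |>.mp ha i) _
      (map_mem_H0 J (DirectSum.component R ι N i) hx)

end H0

section SMulTop

variable {R : Type*} [CommRing R] (I : Ideal R)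

theorem Submodule.map_smul_top_le {M N : Type*} [AddCommGroup M] [Module R M] [AddCommGroup N]
    [Module R N] (f : M →ₗ[R] N) : (I • ⊤ : Submodule R M).map f ≤ I • ⊤ := by
  rw [Submodule.map_smul'']
  exact smul_mono_right I le_top

open DirectSum in
theorem DirectSum.ker_lmap_mkQ_smul_top {ι : Type*} (N : ι → Type*) [∀ i, AddCommGroup (N i)]
    [∀ i, Module R (N i)] :
    LinearMap.ker (lmap fun i => (I • ⊤ : Submodule R (N i)).mkQ) = I • ⊤ := by
  classical
  refine le_antisymm (fun x hx => ?_) (Submodule.smul_le.mpr fun a ha x _ => ?_)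
  · have hcomp : ∀ i, x i ∈ (I • ⊤ : Submodule R (N i)) := fun i => by
      have := DFunLike.congr_fun (LinearMap.mem_ker.mp hx) i
      rwa [lmap_apply, DirectSum.zero_apply, Submodule.mkQ_apply,
        Submodule.Quotient.mk_eq_zero] at this
    rw [← DirectSum.sum_support_of x]
    exact Submodule.sum_mem _ fun i _ =>
      Submodule.map_smul_top_le I (lof R ι N i) ⟨x i, hcomp i, rfl⟩
  · refine LinearMap.mem_ker.mpr (DFunLike.ext _ _ fun i => ?_)
    rw [lmap_apply, DirectSum.zero_apply, Submodule.mkQ_apply, DirectSum.smul_apply,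
      Submodule.Quotient.mk_eq_zero]
    exact Submodule.smul_mem_smul ha Submodule.mem_top

open DirectSum in
theorem annihilator_H0_quotient_le_of_equiv_directSum (J : Ideal R) {M ι : Type*}
    [AddCommGroup M] [Module R M] (N : ι → Type*) [∀ i, AddCommGroup (N i)] [∀ i, Module R (N i)]
    (e : M ≃ₗ[R] ⨁ i, N i) :
    ⨅ i, (H0 J (N i ⧸ (I • ⊤ : Submodule R (N i)))).annihilator ≤
      (H0 J (M ⧸ (I • ⊤ : Submodule R M))).annihilator := by
  set g := (lmap fun i => (I • ⊤ : Submodule R (N i)).mkQ) ∘ₗ e.toLinearMap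
  have hker : I • ⊤ = LinearMap.ker g := by
    rw [LinearMap.ker_comp, DirectSum.ker_lmap_mkQ_smul_top, Submodule.comap_equiv_eq_map_symm,
      Submodule.map_smul'', Submodule.map_top, LinearEquiv.range]
  calc ⨅ i, (H0 J (N i ⧸ (I • ⊤ : Submodule R (N i)))).annihilator
      ≤ (H0 J (⨁ i, N i ⧸ (I • ⊤ : Submodule R (N i)))).annihilator :=
        iInf_annihilator_H0_le_annihilator_H0_directSum J _
    _ ≤ (H0 J (M ⧸ (I • ⊤ : Submodule R M))).annihilator :=
        annihilator_H0_le_of_injective J _ <| LinearMap.ker_eq_bot.mp <|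
          Submodule.ker_liftQ_eq_bot' _ g hker

end SMulTop

namespace Ideal

variable {R : Type*} [CommRing R]

open Finset in
-- A product of `#T * q` elements of `T` repeats some factor `q` times.
theorem span_pow_card_mul_le (T : Finset R) (hT : T.Nonempty) (q : ℕ) :
    span (T : Set R) ^ (#T * q) ≤ span ((· ^ q) '' (T : Set R)) := by
  classical
  rw [span, Submodule.span_pow, span, Submodule.span_le]
  intro _ hz
  obtain ⟨f, rfl⟩ := Set.mem_pow.mp hz
  obtain ⟨y, hyT, hq⟩ := exists_le_card_fiber_of_mul_le_card_of_maps_to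
    (s := univ) (f := fun i => (f i : R)) (n := q) (fun i _ => (f i).2) hT (by simp)
  have hdvd : y ^ q ∣ (List.ofFn fun i => (f i : R)).prod := by
    rw [List.prod_ofFn]
    calc y ^ q ∣ y ^ #{i | (f i : R) = y} := pow_dvd_pow y hq
      _ = ∏ i ∈ {i | (f i : R) = y}, (f i : R) :=
        (prod_eq_pow_card fun i hi => (mem_filter.mp hi).2).symm
      _ ∣ ∏ i, (f i : R) := prod_dvd_prod_of_subset _ _ _ (filter_subset _ _)
  exact mem_of_dvd _ hdvd (subset_span ⟨y, hyT, rfl⟩)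

theorem FG.exists_pow_mul_le_frobPow {J : Ideal R} (hJ : J.FG) :
    ∃ N, ∀ q, J ^ (N * q) ≤ J.frobPow q := by
  classical
  obtain ⟨T, hT⟩ := hJ
  have hspan : span ((insert 0 T : Finset R) : Set R) = J := by
    rw [Finset.coe_insert, span, Submodule.span_insert_zero]
    exact hT
  refine ⟨(insert 0 T).card, fun q => ?_⟩
  calc J ^ ((insert 0 T).card * q) ≤ span ((· ^ q) '' ((insert 0 T : Finset R) : Set R)) :=
        hspan ▸ span_pow_card_mul_le _ (Finset.insert_nonempty 0 T) q
    _ ≤ J.frobPow q := span_mono (Set.image_mono (hspan ▸ subset_span))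

theorem frobPow_eq_map_iterateFrobenius (I : Ideal R) (p n : ℕ) [ExpChar R p] :
    I.frobPow (p ^ n) = I.map (iterateFrobenius R p n) :=
  congrArg span <| Set.image_congr fun x _ => (iterateFrobenius_def p n x).symm

theorem map_iterateFrobenius_le (J : Ideal R) (p n : ℕ) [ExpChar R p] :
    J.map (iterateFrobenius R p n) ≤ J :=
  map_le_iff_le_comap.mpr fun a ha => by
    rw [mem_comap, iterateFrobenius_def]
    exact pow_mem_of_mem _ ha _ (pow_pos (expChar_pos R p) n)

end Ideal

namespace FrobAlg

variable {R : Type*} [CommRing R] (φ : R →+* R)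

theorem of_mem_smul_top_iff (I : Ideal R) (z : R) :
    of R φ z ∈ I • (⊤ : Submodule R (FrobAlg R φ)) ↔ z ∈ I.map φ := by
  rw [Ideal.smul_top_eq_map]
  rfl

theorem smul_of (a z : R) : a • of R φ z = of R φ (φ a * z) := rfl

theorem map_annihilator_H0_quotient_le (I J : Ideal R) (hφ : J.map φ ≤ J) :
    (H0 J (FrobAlg R φ ⧸ (I • ⊤ : Submodule R (FrobAlg R φ)))).annihilator.map φ ≤
      (H0 J (R ⧸ I.map φ)).annihilator := by
  -- `FrobAlg R φ ⧸ I • ⊤` is `R ⧸ I.map φ` with `R` acting through `φ`.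
  refine Ideal.map_le_iff_le_comap.mpr fun a ha => Submodule.mem_annihilator.mpr fun x hx => ?_
  obtain ⟨y, rfl⟩ := Submodule.Quotient.mk_surjective _ x
  obtain ⟨k, hk⟩ := (mem_H0_iff J).mp hx
  have hy : Submodule.Quotient.mk (of R φ y) ∈
      H0 J (FrobAlg R φ ⧸ (I • ⊤ : Submodule R (FrobAlg R φ))) := by
    refine (mem_H0_iff J).mpr ⟨k, fun b hb => ?_⟩
    have hφb : φ b ∈ J ^ k := by
      refine Ideal.pow_right_mono hφ k ?_
      rw [← Ideal.map_pow]
      exact Ideal.mem_map_of_mem φ hb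
    have := hk _ hφb
    rw [← Submodule.Quotient.mk_smul, Submodule.Quotient.mk_eq_zero] at this ⊢
    rwa [smul_of, of_mem_smul_top_iff]
  have := Submodule.mem_annihilator.mp ha _ hy
  rw [← Submodule.Quotient.mk_smul, Submodule.Quotient.mk_eq_zero, smul_of,
    of_mem_smul_top_iff] at this
  rwa [← Submodule.Quotient.mk_smul, Submodule.Quotient.mk_eq_zero]

end FrobAlg

open DirectSum in
theorem lc_of_finite_F_representation_type_general
    {K R : Type*} [Field K] [CommRing R] [Algebra K R] [IsNoetherianRing R]
    (p : ℕ) [Fact p.Prime] [CharP R p]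
    (𝒜 : ℕ → Submodule K R) [GradedAlgebra 𝒜]
    -- finite F-representation type:
    (s : ℕ) (Mod : Fin s → Type*)
    [∀ i, AddCommGroup (Mod i)] [∀ i, Module R (Mod i)] [∀ i, Module.Finite R (Mod i)]
    (ℳ : ∀ i, ℚ → AddSubgroup (Mod i))
    (C : ℚ)
    (hffrt : ∀ n : ℕ, ∃ (t : ℕ) (idx : Fin t → Fin s) (ℓ : Fin t → ℚ),
      (∀ j, C ≤ ℓ j) ∧
      ∃ e : FrobAlg R (iterateFrobenius R p n) ≃ₗ[R] (⨁ j : Fin t, Mod (idx j)),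
        ∀ (d : ℕ) (r : R), r ∈ 𝒜 d → ∀ j : Fin t,
          (e (FrobAlg.of R (iterateFrobenius R p n) r)) j ∈
            ℳ (idx j) ((d : ℚ) / ((p : ℚ) ^ n) + ℓ j))
    (I : Ideal R) :
    ∃ b : ℕ, ∀ n : ℕ,
      ((HomogeneousIdeal.irrelevant 𝒜).toIdeal ^ (b * p ^ n)) •
        H0 ((HomogeneousIdeal.irrelevant 𝒜).toIdeal) (R ⧸ I.frobPow (p ^ n)) = ⊥ := by
  set m := (HomogeneousIdeal.irrelevant 𝒜).toIdeal
  obtain ⟨N, hN⟩ := Ideal.FG.exists_pow_mul_le_frobPow (IsNoetherian.noetherian m)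
  obtain ⟨c, hc⟩ :=
    exists_pow_le_annihilator_H0_forall m fun i => Mod i ⧸ (I • ⊤ : Submodule R (Mod i))
  refine ⟨N * c, fun n => ?_⟩
  obtain ⟨t, idx, -, -, e, -⟩ := hffrt n
  set φ := iterateFrobenius R p n
  have hF : m ^ c ≤ (H0 m (FrobAlg R φ ⧸ (I • ⊤ : Submodule R (FrobAlg R φ)))).annihilator :=
    (le_iInf fun j => hc (idx j)).trans (annihilator_H0_quotient_le_of_equiv_directSum I m _ e)
  rw [← Submodule.le_annihilator_iff, I.frobPow_eq_map_iterateFrobenius]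
  calc m ^ (N * c * p ^ n) = (m ^ (N * p ^ n)) ^ c := by ring
    _ ≤ (m.map φ) ^ c :=
        Ideal.pow_right_mono ((hN _).trans_eq (m.frobPow_eq_map_iterateFrobenius p n)) c
    _ = (m ^ c).map φ := (Ideal.map_pow _ _ _).symm
    _ ≤ _ := Ideal.map_mono hF
    _ ≤ _ := FrobAlg.map_annihilator_H0_quotient_le φ I m (m.map_iterateFrobenius_le p n)

open DirectSum in
/-- Discussion 4.7(iii): let `R` be a standard graded ring of finite F-representation type over
an F-finite field `K` of prime characteristic `p`.  That is: there are finitely generated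
(ℚ-graded) modules `M₁, …, M_s` such that for every `q = pⁿ` the module `Fⁿ(R)` (which is `R`
viewed as an `R`-module via the `n`-th Frobenius, with its `1/q`-rescaled grading) decomposes,
as a graded module, as a finite direct sum of shifts `Mᵢ(ℓ)` with all occurring shifts bounded
below.  Then every homogeneous ideal `I` satisfies the (LC) property. -/
theorem lc_of_finite_F_representation_type
    {K R : Type*} [Field K] [CommRing R] [Algebra K R] [IsNoetherianRing R]
    (p : ℕ) [Fact p.Prime] [CharP K p] [CharP R p]
    -- the base field is F-finite:
    (hFfin : Module.Finite K (FrobAlg K (frobenius K p)))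
    (𝒜 : ℕ → Submodule K R) [GradedAlgebra 𝒜] (hstd : IsStandardGraded 𝒜)
    -- finite F-representation type:
    (s : ℕ) (Mod : Fin s → Type*)
    [∀ i, AddCommGroup (Mod i)] [∀ i, Module R (Mod i)] [∀ i, Module.Finite R (Mod i)]
    (ℳ : ∀ i, ℚ → AddSubgroup (Mod i))
    (hinternal : ∀ i, DirectSum.IsInternal (ℳ i))
    (hgsmul : ∀ (i : Fin s) (d : ℕ) (e : ℚ) (r : R) (x : Mod i),
      r ∈ 𝒜 d → x ∈ ℳ i e → r • x ∈ ℳ i ((d : ℚ) + e))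
    (C : ℚ)
    (hffrt : ∀ n : ℕ, ∃ (t : ℕ) (idx : Fin t → Fin s) (ℓ : Fin t → ℚ),
      (∀ j, C ≤ ℓ j) ∧
      ∃ e : FrobAlg R (iterateFrobenius R p n) ≃ₗ[R] (⨁ j : Fin t, Mod (idx j)),
        ∀ (d : ℕ) (r : R), r ∈ 𝒜 d → ∀ j : Fin t,
          (e (FrobAlg.of R (iterateFrobenius R p n) r)) j ∈
            ℳ (idx j) ((d : ℚ) / ((p : ℚ) ^ n) + ℓ j))
    (I : Ideal R) (hI : I.IsHomogeneous 𝒜) :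
    ∃ b : ℕ, ∀ n : ℕ,
      ((HomogeneousIdeal.irrelevant 𝒜).toIdeal ^ (b * p ^ n)) •
        H0 ((HomogeneousIdeal.irrelevant 𝒜).toIdeal) (R ⧸ I.frobPow (p ^ n)) = ⊥ :=
  lc_of_finite_F_representation_type_general p 𝒜 s Mod ℳ C hffrt I
end

section
/- Let R be a standard graded ring over a field of prime characteristic p and let M be a finitely generated graded R-module with dim M = 1. Then ⋃_{n∈ℕ} Ass_R(Fⁿ(M)) is a finite set; indeed it is contained in the (finite) union of the minimal primes of Supp(M) and the irrelevant maximal ideal m. -/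
/-- The Peskine–Szpiro (Frobenius) functor `Fⁿ(M) = Fⁿ(R) ⊗_R M`, realized as base change
of `M` along `φ` (for `φ` the `n`-th iterate of the Frobenius). -/
def FrobMod (R : Type*) [CommRing R] (φ : R →+* R)
    (M : Type*) [AddCommGroup M] [Module R M] : Type _ :=
  TensorProduct R (FrobAlg R φ) M

noncomputable instance FrobMod.addCommGroup (R : Type*) [CommRing R] (φ : R →+* R)
    (M : Type*) [AddCommGroup M] [Module R M] : AddCommGroup (FrobMod R φ M) :=
  inferInstanceAs (AddCommGroup (TensorProduct R (FrobAlg R φ) M))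

noncomputable instance FrobMod.module (R : Type*) [CommRing R] (φ : R →+* R)
    (M : Type*) [AddCommGroup M] [Module R M] : Module R (FrobMod R φ M) :=
  inferInstanceAs (Module (FrobAlg R φ) (TensorProduct R (FrobAlg R φ) M))

/-!
Every associated prime `P = √(0 : z)` of `Fⁿ(M)` contains `ann M`, since `s ∈ ann M` gives
`s ^ pⁿ ∈ ann Fⁿ(M)`. Moreover `Fⁿ(M)` is `ℤ`-graded, `a ⊗ x` having degree `i + pⁿ k` for
`a ∈ R_i`, `x ∈ M_k`. If `aᵐ z = 0`, then in the lowest degree of `z ≠ 0` the product `aᵐ z` has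
component `(a₀)ᵐ z_low`, so `a₀ ∈ R₀ = K` is not a unit; hence `a₀ = 0` and `P ⊆ m`.
As `dim R / ann M = 1`, a prime between `ann M` and `m` is minimal over `ann M` or equal to `m`.
-/

lemma Submodule.eq_zero_or_isUnit_of_mem_one {K R : Type*} [Field K] [CommRing R] [Algebra K R]
    {b : R} (hb : b ∈ (1 : Submodule K R)) : b = 0 ∨ IsUnit b := by
  obtain ⟨c, rfl⟩ := Submodule.mem_one.mp hb
  rcases eq_or_ne c 0 with rfl | hc
  · exact Or.inl (map_zero _)
  · exact Or.inr ((IsUnit.mk0 c hc).map _)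

lemma Ideal.mem_minimalPrimes_or_eq_of_ringKrullDim_quotient_le_one {R : Type*} [CommRing R]
    {I P m : Ideal R} (hdim : ringKrullDim (R ⧸ I) ≤ 1) [hP : P.IsPrime] [hm : m.IsPrime]
    (hIP : I ≤ P) (hPm : P ≤ m) : P ∈ I.minimalPrimes ∨ P = m := by
  rw [ringKrullDim_quotient, Order.krullDim_le_one_iff] at hdim
  rcases hdim ⟨⟨P, hP⟩, hIP⟩ with hmin | hmax
  · exact Or.inl ⟨⟨hP, hIP⟩, fun Q ⟨hQ, hIQ⟩ hQP => hmin (b := ⟨⟨Q, hQ⟩, hIQ⟩) hQP⟩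
  · exact Or.inr (le_antisymm hPm (hmax (b := ⟨⟨m, hm⟩, hIP.trans hPm⟩) hPm))

namespace DirectSum.Decomposition

variable {ι ι' R M T σ τ : Type*} [DecidableEq ι] [DecidableEq ι'] [AddCommMonoid R]
  [AddCommMonoid M] [AddCommMonoid T] [SetLike σ R] [AddSubmonoidClass σ R]
  [SetLike τ M] [AddSubmonoidClass τ M] (𝒜 : ι → σ) (ℳ : ι' → τ)
  [Decomposition 𝒜] [Decomposition ℳ]

lemma addHom_ext₂ {f g : R →+ M →+ T}
    (h : ∀ {i k} {a : R} {x : M}, a ∈ 𝒜 i → x ∈ ℳ k → f a x = g a x) : f = g := by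
  ext a x
  induction a using Decomposition.inductionOn 𝒜 with
  | zero => simp
  | add a b ha hb => simp only [map_add, AddMonoidHom.add_apply, ha, hb]
  | homogeneous a =>
    induction x using Decomposition.inductionOn ℳ with
    | zero => simp
    | add x y hx hy => simp only [map_add, hx, hy]
    | homogeneous x => exact h a.2 x.2

end DirectSum.Decomposition

section GradedByNat

variable {R N σ : Type*} [CommRing R] [AddCommGroup N] [Module R N] [SetLike σ R]
  [AddSubmonoidClass σ R] (𝒜 : ℕ → σ) [GradedRing 𝒜]

lemma HomogeneousIdeal.isPrime_irrelevant [Nontrivial R]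
    (h𝒜₀ : ∀ b ∈ 𝒜 0, b = 0 ∨ IsUnit b) : (irrelevant 𝒜).toIdeal.IsPrime := by
  rw [HomogeneousIdeal.toIdeal_irrelevant]
  refine ⟨RingHom.ker_ne_top _, fun {x y} hxy => ?_⟩
  rw [RingHom.mem_ker, map_mul] at hxy
  rcases h𝒜₀ _ (SetLike.coe_mem (DirectSum.decompose 𝒜 x 0)) with hx | hx
  · exact Or.inl hx
  · exact Or.inr (hx.mul_right_eq_zero.mp hxy)

variable {𝒜} {π : N →+ (ℤ →₀ N)} (hπ : Function.Injective π)
  (hπ_smul : ∀ {e : ℕ} {r : R}, r ∈ 𝒜 e → ∀ z d, π (r • z) d = r • π z (d - e))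

include hπ hπ_smul in
lemma exists_proj_zero_smul_eq_zero {a : R} {z : N} (hz : z ≠ 0) (haz : a • z = 0) :
    ∃ j, π z j ≠ 0 ∧ GradedRing.proj 𝒜 0 a • π z j = 0 := by
  classical
  have hne : (π z).support.Nonempty :=
    Finsupp.support_nonempty_iff.mpr fun h => hz (hπ (h.trans (map_zero π).symm))
  set j := (π z).support.min' hne
  refine ⟨j, Finsupp.mem_support_iff.mp ((π z).support.min'_mem hne), ?_⟩
  have hsum : π (a • z) j =
      ∑ i ∈ (DirectSum.decompose 𝒜 a).support, GradedRing.proj 𝒜 i a • π z (j - i) := by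
    conv_lhs => rw [← DirectSum.sum_support_decompose 𝒜 a]
    rw [Finset.sum_smul, map_sum, Finsupp.finsetSum_apply]
    exact Finset.sum_congr rfl fun i _ => hπ_smul (SetLike.coe_mem _) z j
  have hlow : ∀ i ∈ (DirectSum.decompose 𝒜 a).support, i ≠ 0 →
      GradedRing.proj 𝒜 i a • π z (j - i) = 0 := by
    intro i _ hi
    have hnot : j - i ∉ (π z).support := fun hmem =>
      absurd ((π z).support.min'_le _ hmem) (by omega)
    rw [Finsupp.notMem_support_iff.mp hnot, smul_zero]
  rw [haz, map_zero, Finsupp.zero_apply, Finset.sum_eq_single 0 hlow, Nat.cast_zero,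
    sub_zero] at hsum
  · exact hsum.symm
  · intro h0
    rw [(GradedRing.mem_support_iff 𝒜 a 0).not_left.mp h0, zero_smul]

include hπ hπ_smul in
lemma le_irrelevant_of_mem_associatedPrimes (h𝒜₀ : ∀ b ∈ 𝒜 0, b = 0 ∨ IsUnit b)
    {P : Ideal R} (hP : P ∈ associatedPrimes R N) :
    P ≤ (HomogeneousIdeal.irrelevant 𝒜).toIdeal := by
  obtain ⟨hprime, z, rfl⟩ := hP
  intro a ⟨n, han⟩
  have hz : z ≠ 0 := by
    rintro rfl
    exact hprime.ne_top (by simp)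
  obtain ⟨j, hj, hsmul⟩ := exists_proj_zero_smul_eq_zero hπ hπ_smul hz
    (Submodule.mem_colon_singleton.mp han)
  have hpow : GradedRing.proj 𝒜 0 (a ^ n) = GradedRing.proj 𝒜 0 a ^ n :=
    map_pow (GradedRing.projZeroRingHom 𝒜) a n
  rcases h𝒜₀ (GradedRing.proj 𝒜 0 a) (SetLike.coe_mem _) with h | h
  · exact h
  · rw [hpow, (h.pow n).smul_eq_zero] at hsmul
    exact absurd hsmul hj

end GradedByNat

namespace FrobMod

variable {R : Type*} [CommRing R] (φ : R →+* R) {M : Type*} [AddCommGroup M] [Module R M]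

noncomputable def tmul (a : R) (x : M) : FrobMod R φ M :=
  TensorProduct.tmul R (FrobAlg.of R φ a) x

lemma add_tmul (a b : R) (x : M) : tmul φ (a + b) x = tmul φ a x + tmul φ b x :=
  TensorProduct.add_tmul _ _ _

lemma tmul_add (a : R) (x y : M) : tmul φ a (x + y) = tmul φ a x + tmul φ a y :=
  TensorProduct.tmul_add _ _ _

@[simp] lemma zero_tmul (x : M) : tmul φ 0 x = 0 := TensorProduct.zero_tmul _ _

@[simp] lemma tmul_zero (a : R) : tmul φ a (0 : M) = 0 := TensorProduct.tmul_zero _ _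

lemma smul_tmul' (r a : R) (x : M) : r • tmul φ a x = tmul φ (r * a) x :=
  TensorProduct.smul_tmul' (R := R) (FrobAlg.of R φ r) (FrobAlg.of R φ a) x

lemma tmul_smul (r a : R) (x : M) : tmul φ a (r • x) = tmul φ (φ r * a) x :=
  (TensorProduct.smul_tmul (R := R) r (FrobAlg.of R φ a) x).symm

variable {φ} in
@[elab_as_elim]
lemma induction_on {motive : FrobMod R φ M → Prop} (z : FrobMod R φ M) (zero : motive 0)
    (tmul : ∀ (a : R) (x : M), motive (tmul φ a x))
    (add : ∀ z w, motive z → motive w → motive (z + w)) : motive z :=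
  TensorProduct.induction_on z zero tmul add

lemma annihilator_le_comap_annihilator :
    (⊤ : Submodule R M).annihilator ≤ (⊤ : Submodule R (FrobMod R φ M)).annihilator.comap φ := by
  intro s hs
  rw [Ideal.mem_comap, Submodule.mem_annihilator]
  rintro z -
  induction z using induction_on with
  | zero => exact smul_zero (φ s)
  | tmul a x =>
    rw [smul_tmul', ← tmul_smul, Submodule.mem_annihilator.mp hs x Submodule.mem_top, tmul_zero]
  | add z w hz hw => rw [smul_add, hz, hw, add_zero]

variable {σ τ : Type*} [SetLike σ R] [AddSubmonoidClass σ R] (𝒜 : ℕ → σ) [GradedRing 𝒜]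
  [SetLike τ M] [AddSubmonoidClass τ M] (ℳ : ℤ → τ) [DirectSum.Decomposition ℳ] (q : ℕ)

variable {φ 𝒜 ℳ} in
@[elab_as_elim]
lemma induction_on_homogeneous {motive : FrobMod R φ M → Prop} (z : FrobMod R φ M)
    (zero : motive 0)
    (tmul : ∀ {i k} {a : R} {x : M}, a ∈ 𝒜 i → x ∈ ℳ k → motive (tmul φ a x))
    (add : ∀ z w, motive z → motive w → motive (z + w)) : motive z := by
  induction z using induction_on with
  | zero => exact zero
  | add z w hz hw => exact add z w hz hw
  | tmul a x =>
    induction a using DirectSum.Decomposition.inductionOn 𝒜 with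
    | zero => simpa using zero
    | add a b ha hb => simpa only [add_tmul] using add _ _ ha hb
    | homogeneous a =>
      induction x using DirectSum.Decomposition.inductionOn ℳ with
      | zero => simpa using zero
      | add x y hx hy => simpa only [tmul_add] using add _ _ hx hy
      | homogeneous x => exact tmul a.2 x.2

noncomputable def tmulHom : R →+ M →+ FrobMod R φ M :=
  AddMonoidHom.mk' (fun a => AddMonoidHom.mk' (tmul φ a) (tmul_add φ a)) fun a b => by
    ext x; exact add_tmul φ a b x

open DirectSum in
noncomputable def gradedTmul : R →+ M →+ (ℤ →₀ FrobMod R φ M) :=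
  let piece (i : ℕ) (k : ℤ) : ℳ k →+ 𝒜 i →+ (ℤ →₀ FrobMod R φ M) :=
    ((((tmulHom φ).compr₂ (Finsupp.singleAddHom ((i : ℤ) + q * k))).comp
      (AddSubmonoidClass.subtype (𝒜 i))).compl₂ (AddSubmonoidClass.subtype (ℳ k))).flip
  (((toAddMonoid fun i => (toAddMonoid (piece i)).flip).comp
    (decomposeAddEquiv 𝒜).toAddMonoidHom).compl₂ (decomposeAddEquiv ℳ).toAddMonoidHom)

lemma gradedTmul_of_mem {i : ℕ} {k : ℤ} {a : R} {x : M} (ha : a ∈ 𝒜 i) (hx : x ∈ ℳ k) :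
    gradedTmul φ 𝒜 ℳ q a x = Finsupp.single ((i : ℤ) + q * k) (tmul φ a x) := by
  have hx' : DirectSum.decomposeAddEquiv ℳ x = DirectSum.of (fun k => ℳ k) k ⟨x, hx⟩ :=
    DirectSum.decompose_of_mem ℳ hx
  have ha' : DirectSum.decomposeAddEquiv 𝒜 a = DirectSum.of (fun i => 𝒜 i) i ⟨a, ha⟩ :=
    DirectSum.decompose_of_mem 𝒜 ha
  simp only [gradedTmul, AddMonoidHom.compl₂_apply, AddMonoidHom.comp_apply,
    AddEquiv.coe_toAddMonoidHom, hx', ha', DirectSum.toAddMonoid_of, AddMonoidHom.flip_apply,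
    AddMonoidHom.compr₂_apply]
  rfl

variable {φ 𝒜 ℳ q}
  (hgsmul : ∀ (i : ℕ) (j : ℤ) (r : R) (x : M), r ∈ 𝒜 i → x ∈ ℳ j → r • x ∈ ℳ (i + j))
  (hφ : ∀ (e : ℕ) (r : R), r ∈ 𝒜 e → φ r ∈ 𝒜 (q * e))

include hgsmul hφ in
lemma gradedTmul_mul_apply (r a : R) (x : M) :
    gradedTmul φ 𝒜 ℳ q (φ r * a) x = gradedTmul φ 𝒜 ℳ q a (r • x) := by
  induction r using DirectSum.Decomposition.inductionOn 𝒜 with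
  | zero => simp
  | add r s hr hs => simp only [map_add, add_mul, add_smul, AddMonoidHom.add_apply, hr, hs]
  | @homogeneous e r =>
    suffices (gradedTmul φ 𝒜 ℳ q).comp (AddMonoidHom.mulLeft (φ r)) =
        (gradedTmul φ 𝒜 ℳ q).compl₂ (DistribSMul.toAddMonoidHom M (r : R)) from
      DFunLike.congr_fun (DFunLike.congr_fun this a) x
    refine DirectSum.Decomposition.addHom_ext₂ 𝒜 ℳ fun {i k a x} ha hx => ?_
    have hdeg : ((q * e + i : ℕ) : ℤ) + q * k = i + q * ((e : ℤ) + k) := by push_cast; ring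
    simp only [AddMonoidHom.comp_apply, AddMonoidHom.compl₂_apply, AddMonoidHom.coe_mulLeft,
      DistribSMul.toAddMonoidHom_apply]
    rw [gradedTmul_of_mem φ 𝒜 ℳ q (SetLike.mul_mem_graded (hφ e r r.2) ha) hx,
      gradedTmul_of_mem φ 𝒜 ℳ q ha (hgsmul e k r x r.2 hx), hdeg, tmul_smul]

variable (φ 𝒜 ℳ q) in
noncomputable def decompose : FrobMod R φ M →+ (ℤ →₀ FrobMod R φ M) :=
  TensorProduct.liftAddHom (gradedTmul φ 𝒜 ℳ q) (gradedTmul_mul_apply hgsmul hφ)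

lemma decompose_tmul_of_mem {i : ℕ} {k : ℤ} {a : R} {x : M} (ha : a ∈ 𝒜 i) (hx : x ∈ ℳ k) :
    decompose φ 𝒜 ℳ q hgsmul hφ (tmul φ a x) = Finsupp.single ((i : ℤ) + q * k) (tmul φ a x) :=
  gradedTmul_of_mem φ 𝒜 ℳ q ha hx

lemma sum_decompose (z : FrobMod R φ M) :
    (decompose φ 𝒜 ℳ q hgsmul hφ z).sum (fun _ v => v) = z := by
  induction z using induction_on_homogeneous (𝒜 := 𝒜) (ℳ := ℳ) with
  | zero => simp
  | tmul ha hx => rw [decompose_tmul_of_mem hgsmul hφ ha hx, Finsupp.sum_single_index rfl]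
  | add z w hz hw =>
    rw [map_add, Finsupp.sum_add_index' (fun _ => rfl) (fun _ _ _ => rfl), hz, hw]

lemma decompose_injective : Function.Injective (decompose φ 𝒜 ℳ q hgsmul hφ) := fun z w h => by
  rw [← sum_decompose hgsmul hφ z, h, sum_decompose]

lemma decompose_smul_apply {e : ℕ} {r : R} (hr : r ∈ 𝒜 e) (z : FrobMod R φ M) (d : ℤ) :
    decompose φ 𝒜 ℳ q hgsmul hφ (r • z) d = r • decompose φ 𝒜 ℳ q hgsmul hφ z (d - e) := by
  induction z using induction_on_homogeneous (𝒜 := 𝒜) (ℳ := ℳ) with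
  | zero => simp
  | @tmul i k a x ha hx =>
    rw [smul_tmul', decompose_tmul_of_mem hgsmul hφ (SetLike.mul_mem_graded hr ha) hx,
      decompose_tmul_of_mem hgsmul hφ ha hx, ← smul_tmul', ← Finsupp.smul_single]
    have hdeg : ((e + i : ℕ) : ℤ) + q * k = d ↔ (i : ℤ) + q * k = d - e := by
      push_cast; constructor <;> intro h <;> linarith
    simp only [Finsupp.smul_apply, Finsupp.single_apply, hdeg]
  | add z w hz hw => simp only [smul_add, map_add, Finsupp.add_apply, hz, hw]

end FrobMod

lemma iterateFrobenius_mem_graded {R σ : Type*} [CommRing R] [SetLike σ R]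
    [AddSubmonoidClass σ R] (𝒜 : ℕ → σ) [GradedRing 𝒜] (p n : ℕ) [ExpChar R p] {e : ℕ} {r : R}
    (hr : r ∈ 𝒜 e) : iterateFrobenius R p n r ∈ 𝒜 (p ^ n * e) :=
  SetLike.pow_mem_graded (p ^ n) hr

lemma annihilator_le_of_mem_associatedPrimes_frobMod {R M : Type*} [CommRing R] [AddCommGroup M]
    [Module R M] (p n : ℕ) [ExpChar R p] {P : Ideal R}
    (hP : P ∈ associatedPrimes R (FrobMod R (iterateFrobenius R p n) M)) :
    (⊤ : Submodule R M).annihilator ≤ P := fun _ hs =>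
  hP.isPrime.mem_of_pow_mem _ (hP.annihilator_le (FrobMod.annihilator_le_comap_annihilator _ hs))

theorem union_ass_frobenius_finite_general
    {K R : Type*} [Field K] [CommRing R] [Algebra K R] [IsNoetherianRing R]
    (p : ℕ) [Fact p.Prime] [CharP R p]
    (𝒜 : ℕ → Submodule K R) [GradedAlgebra 𝒜] (hstd : IsStandardGraded 𝒜)
    (M : Type*) [AddCommGroup M] [Module R M] [Module K M]
    (ℳ : ℤ → Submodule K M) (hdecomp : DirectSum.IsInternal ℳ)
    (hgsmul : ∀ (i : ℕ) (j : ℤ) (r : R) (x : M), r ∈ 𝒜 i → x ∈ ℳ j → r • x ∈ ℳ (i + j))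
    (hdim : ringKrullDim (R ⧸ (⊤ : Submodule R M).annihilator) = 1) :
    (⋃ n : ℕ, associatedPrimes R (FrobMod R (iterateFrobenius R p n) M)) ⊆
      ((⊤ : Submodule R M).annihilator).minimalPrimes ∪
        {(HomogeneousIdeal.irrelevant 𝒜).toIdeal} ∧
    (⋃ n : ℕ, associatedPrimes R (FrobMod R (iterateFrobenius R p n) M)).Finite := by
  have : Nontrivial R := CharP.nontrivial_of_char_ne_one (Fact.out : p.Prime).ne_one
  let _ : DirectSum.Decomposition ℳ := hdecomp.chooseDecomposition
  have h𝒜₀ (b : R) (hb : b ∈ 𝒜 0) : b = 0 ∨ IsUnit b :=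
    Submodule.eq_zero_or_isUnit_of_mem_one (hstd.1 ▸ hb)
  have : (HomogeneousIdeal.irrelevant 𝒜).toIdeal.IsPrime :=
    HomogeneousIdeal.isPrime_irrelevant 𝒜 h𝒜₀
  have hsub : (⋃ n : ℕ, associatedPrimes R (FrobMod R (iterateFrobenius R p n) M)) ⊆
      ((⊤ : Submodule R M).annihilator).minimalPrimes ∪
        {(HomogeneousIdeal.irrelevant 𝒜).toIdeal} := by
    refine Set.iUnion_subset fun n P hP => ?_
    have : P.IsPrime := hP.isPrime
    have hφ (e : ℕ) (r : R) (hr : r ∈ 𝒜 e) := iterateFrobenius_mem_graded 𝒜 p n hr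
    exact Ideal.mem_minimalPrimes_or_eq_of_ringKrullDim_quotient_le_one hdim.le
      (annihilator_le_of_mem_associatedPrimes_frobMod p n hP)
      (le_irrelevant_of_mem_associatedPrimes (FrobMod.decompose_injective hgsmul hφ)
        (FrobMod.decompose_smul_apply hgsmul hφ) h𝒜₀ hP)
  exact ⟨hsub, ((Ideal.finite_minimalPrimes_of_isNoetherianRing R _).union
    (Set.finite_singleton _)).subset hsub⟩

/-- Lemma 6.2: for a one-dimensional finitely generated graded module `M` over a standard graded
ring of prime characteristic `p`, the union `⋃ₙ Ass(Fⁿ(M))` is finite; indeed it is contained in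
the union of the (finitely many) minimal primes of the support of `M` and the irrelevant maximal
ideal. -/
theorem union_ass_frobenius_finite
    {K R : Type*} [Field K] [CommRing R] [Algebra K R] [IsNoetherianRing R]
    (p : ℕ) [Fact p.Prime] [CharP R p]
    (𝒜 : ℕ → Submodule K R) [GradedAlgebra 𝒜] (hstd : IsStandardGraded 𝒜)
    (M : Type*) [AddCommGroup M] [Module R M] [Module K M] [IsScalarTower K R M]
    [Module.Finite R M]
    (ℳ : ℤ → Submodule K M) (hdecomp : DirectSum.IsInternal ℳ)
    (hgsmul : ∀ (i : ℕ) (j : ℤ) (r : R) (x : M), r ∈ 𝒜 i → x ∈ ℳ j → r • x ∈ ℳ (i + j))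
    (hdim : ringKrullDim (R ⧸ (⊤ : Submodule R M).annihilator) = 1) :
    (⋃ n : ℕ, associatedPrimes R (FrobMod R (iterateFrobenius R p n) M)) ⊆
      ((⊤ : Submodule R M).annihilator).minimalPrimes ∪
        {(HomogeneousIdeal.irrelevant 𝒜).toIdeal} ∧
    (⋃ n : ℕ, associatedPrimes R (FrobMod R (iterateFrobenius R p n) M)).Finite :=
  union_ass_frobenius_finite_general p 𝒜 hstd M ℳ hdecomp hgsmul hdim
end
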